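/- arXiv:1807.02574 — 2 statements merged into one kernel-verified Lean document; each statement's English description precedes it below -/
import Mathlib

section
/- Let H = (C,F,D,G) be a hybrid system on X ⊆ ℝ^n such that F is outer semicontinuous on C with nonempty convex values and locally bounded on C, and G has nonempty values on D. Let p be an atomic proposition whose truth set K = {x ∈ X : p(x) = 1} is closed and satisfies K ⊆ C ∪ D. Suppose there exists a continuously differentiable barrier function candidate B with respect to K for H, an open neighborhood U of the boundary ∂K of K, such that: (1) ⟨∇B(x), η⟩ ≤ 0 for every x ∈ C ∩ (U \ K) and every η ∈ F(x) ∩ T_C(x); (2) B(η) ≤ 0 for every x ∈ D ∩ K and every η ∈ G(x); and (3) G(D ∩ K) ⊆ C ∪ D. Then every maximal solution φ to H with φ(0,0) ∈ K satisfies the formula □p at every (t,j) ∈ dom φ; in particular, φ(t,j) ∈ K for all (t,j) ∈ dom φ. -/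
open Set Filter Topology MeasureTheory
open scoped ENNReal NNReal

noncomputable section

/-- The state space `ℝⁿ`. -/
abbrev ES (n : ℕ) := EuclideanSpace ℝ (Fin n)

/-- A hybrid system `H = (C,F,D,G)` on a state space `X ⊆ ℝⁿ`. -/
structure HybridSystem (n : ℕ) where
  X : Set (ES n)
  C : Set (ES n)
  F : ES n → Set (ES n)
  D : Set (ES n)
  G : ES n → Set (ES n)
  C_subset_X : C ⊆ X
  D_subset_X : D ⊆ X
  data_subset_X : closure C ∪ D ∪ (⋃ x ∈ D, G x) ⊆ X

/-- A hybrid time domain `E ⊆ [0,∞) × ℕ`. -/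
def IsHybridTimeDomain (E : Set (ℝ × ℕ)) : Prop :=
  (∀ q ∈ E, 0 ≤ q.1) ∧
  ∀ q ∈ E, ∃ τ : ℕ → ℝ, τ 0 = 0 ∧ τ (q.2 + 1) = q.1 ∧
    (∀ i : ℕ, i ≤ q.2 → τ i ≤ τ (i + 1)) ∧
    (∀ s : ℝ, ∀ j : ℕ, ((s, j) ∈ E ∧ s ≤ q.1 ∧ j ≤ q.2) ↔ (j ≤ q.2 ∧ τ j ≤ s ∧ s ≤ τ (j + 1)))

/-- A hybrid arc: a function defined on a hybrid time domain. -/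
structure HybridArc (n : ℕ) where
  dom : Set (ℝ × ℕ)
  toFun : ℝ → ℕ → ES n
  htd : IsHybridTimeDomain dom
  zero_mem : ((0 : ℝ), (0 : ℕ)) ∈ dom

variable {n : ℕ}

/-- `s` is a solution to the hybrid system `H`: the initial condition lies in
`closure C ∪ D`; on each interval `I^j` the arc is (locally) absolutely continuous,
i.e. it is the integral of an integrable selection `f` with `f t ∈ F (φ t j)` a.e.,
and `φ t j ∈ C` on the interior of `I^j`; and jumps satisfy the jump conditions. -/
structure IsSolution (H : HybridSystem n) (s : HybridArc n) : Prop where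
  init : s.toFun 0 0 ∈ closure H.C ∪ H.D
  flow : ∀ j : ℕ, ∃ f : ℝ → ES n,
    (∀ t ∈ interior {t : ℝ | (t, j) ∈ s.dom}, s.toFun t j ∈ H.C) ∧
    (∀ᵐ t ∂volume, (t, j) ∈ s.dom → f t ∈ H.F (s.toFun t j)) ∧
    (∀ a b : ℝ, (a, j) ∈ s.dom → (b, j) ∈ s.dom →
      IntervalIntegrable f volume a b ∧ s.toFun b j = s.toFun a j + ∫ u in a..b, f u)
  jump : ∀ t : ℝ, ∀ j : ℕ, (t, j) ∈ s.dom → (t, j + 1) ∈ s.dom →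
    s.toFun t j ∈ H.D ∧ s.toFun t (j + 1) ∈ H.G (s.toFun t j)

/-- `s` is a maximal solution to `H`: it is a solution that is not a proper
restriction of another solution. -/
def IsMaximal (H : HybridSystem n) (s : HybridArc n) : Prop :=
  IsSolution H s ∧
  ∀ s' : HybridArc n, IsSolution H s' → s.dom ⊆ s'.dom →
    (∀ q ∈ s.dom, s'.toFun q.1 q.2 = s.toFun q.1 q.2) → s'.dom = s.dom

/-- `s` satisfies `□ p` at `(t,j)`, where `K` is the truth set of `p`. -/
def SatAlwaysAt (s : HybridArc n) (K : Set (ES n)) (t : ℝ) (j : ℕ) : Prop :=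
  ∀ t' : ℝ, ∀ j' : ℕ, (t', j') ∈ s.dom → t + (j : ℝ) ≤ t' + (j' : ℝ) → s.toFun t' j' ∈ K

/-- `s` satisfies `◇ p` at `(t,j)`, where `K` is the truth set of `p`. -/
def SatEventuallyAt (s : HybridArc n) (K : Set (ES n)) (t : ℝ) (j : ℕ) : Prop :=
  ∃ t' : ℝ, ∃ j' : ℕ, (t', j') ∈ s.dom ∧ t + (j : ℝ) ≤ t' + (j' : ℝ) ∧ s.toFun t' j' ∈ K

/-- `s` satisfies `○ p` at `(t,j)`, where `K` is the truth set of `p`. -/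
def SatNextAt (s : HybridArc n) (K : Set (ES n)) (t : ℝ) (j : ℕ) : Prop :=
  (t, j + 1) ∈ s.dom ∧ s.toFun t (j + 1) ∈ K

/-- `s` satisfies `p U_s q` at `(t,j)`, where `P`, `Q` are the truth sets of `p`, `q`. -/
def SatUntilSAt (s : HybridArc n) (P Q : Set (ES n)) (t : ℝ) (j : ℕ) : Prop :=
  ∃ t' : ℝ, ∃ j' : ℕ, (t', j') ∈ s.dom ∧ t + (j : ℝ) ≤ t' + (j' : ℝ) ∧ s.toFun t' j' ∈ Q ∧
    ∀ t'' : ℝ, ∀ j'' : ℕ, (t'', j'') ∈ s.dom →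
      t + (j : ℝ) ≤ t'' + (j'' : ℝ) → t'' + (j'' : ℝ) < t' + (j' : ℝ) → s.toFun t'' j'' ∈ P

/-- `s` satisfies `p U_w q` at `(t,j)`. -/
def SatUntilWAt (s : HybridArc n) (P Q : Set (ES n)) (t : ℝ) (j : ℕ) : Prop :=
  (∀ t' : ℝ, ∀ j' : ℕ, (t', j') ∈ s.dom → t + (j : ℝ) ≤ t' + (j' : ℝ) → s.toFun t' j' ∈ P) ∨
  SatUntilSAt s P Q t j

/-- `s` satisfies `◇ □ p` at `(t,j)`, where `K` is the truth set of `p`. -/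
def SatEvAlwaysAt (s : HybridArc n) (K : Set (ES n)) (t : ℝ) (j : ℕ) : Prop :=
  ∃ t' : ℝ, ∃ j' : ℕ, (t', j') ∈ s.dom ∧ t + (j : ℝ) ≤ t' + (j' : ℝ) ∧
    ∀ t'' : ℝ, ∀ j'' : ℕ, (t'', j'') ∈ s.dom → t' + (j' : ℝ) ≤ t'' + (j'' : ℝ) →
      s.toFun t'' j'' ∈ K

/-- The settling time `T(φ) = inf {t+j : (t,j) ∈ dom φ, φ(t,j) ∈ K}` (with `inf ∅ = ∞`). -/
def settlingTime (s : HybridArc n) (K : Set (ES n)) : ℝ≥0∞ :=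
  sInf {e : ℝ≥0∞ | ∃ t : ℝ, ∃ j : ℕ, (t, j) ∈ s.dom ∧ s.toFun t j ∈ K ∧
    e = ENNReal.ofReal (t + (j : ℝ))}

/-- `sup_{(t,j) ∈ dom φ} (t + j)`. -/
def domSupTJ (s : HybridArc n) : ℝ≥0∞ := ⨆ q ∈ s.dom, ENNReal.ofReal (q.1 + (q.2 : ℝ))

/-- `sup_{(t,j) ∈ dom φ} t`. -/
def domSupT (s : HybridArc n) : ℝ≥0∞ := ⨆ q ∈ s.dom, ENNReal.ofReal q.1

/-- `sup_{(t,j) ∈ dom φ} j`. -/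
def domSupJ (s : HybridArc n) : ℝ≥0∞ := ⨆ q ∈ s.dom, (q.2 : ℝ≥0∞)

/-- The closed set `K` is finite time attractive (FTA) for `H` with respect to `O`:
every maximal solution from `O` satisfies `sup_{(t,j) ∈ dom φ} (t+j) ≥ T(φ)` and
`dist(φ(t,j),K) → 0` as `t+j ↗ T(φ)` along `(t,j) ∈ dom φ`. -/
def FTAwrt (H : HybridSystem n) (K O : Set (ES n)) : Prop :=
  ∀ s : HybridArc n, IsMaximal H s → s.toFun 0 0 ∈ O →
    settlingTime s K ≤ domSupTJ s ∧
    Tendsto (fun q : ℝ × ℕ => Metric.infDist (s.toFun q.1 q.2) K)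
      ((Filter.comap (fun q : ℝ × ℕ => ENNReal.ofReal (q.1 + (q.2 : ℝ)))
        (𝓝[<] (settlingTime s K))) ⊓ 𝓟 s.dom) (𝓝 0)

/-- The Clarke generalized directional derivative
`V°(x,v) = limsup_{y → x, h ↓ 0} (V(y + h v) − V(y))/h`. -/
def clarkeDeriv (V : ES n → ℝ) (x v : ES n) : ℝ :=
  limsup (fun q : ES n × ℝ => (V (q.1 + q.2 • v) - V q.1) / q.2) ((𝓝 x) ×ˢ (𝓝[>] (0 : ℝ)))

/-- `u_C(x) ≤ b`, i.e. `sup_{v ∈ F(x)} V°(x,v) ≤ b`. -/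
def uC_le (H : HybridSystem n) (V : ES n → ℝ) (x : ES n) (b : ℝ) : Prop :=
  ∀ v ∈ H.F x, clarkeDeriv V x v ≤ b

/-- `u_D(x) ≤ b`, i.e. `sup_{ζ ∈ G(x)} V(ζ) − V(x) ≤ b`. -/
def uD_le (H : HybridSystem n) (V : ES n → ℝ) (x : ES n) (b : ℝ) : Prop :=
  ∀ ζ ∈ H.G x, V ζ - V x ≤ b

/-- `V` is positive definite with respect to `K` (on `N`). -/
def PosDefWrt (V : ES n → ℝ) (K N : Set (ES n)) : Prop :=
  (∀ x ∈ K ∩ N, V x = 0) ∧ ∀ x ∈ N \ K, 0 < V x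

/-- `V` is locally Lipschitz on an open neighborhood of `S`. -/
def LocallyLipschitzOnNhdOf (V : ES n → ℝ) (S : Set (ES n)) : Prop :=
  ∃ U : Set (ES n), IsOpen U ∧ S ⊆ U ∧
    ∀ x ∈ U, ∃ L : ℝ≥0, ∃ W ∈ 𝓝 x, LipschitzOnWith L V W

/-- The sublevel set `L_V(r) = {x ∈ N : V(x) ≤ r}` for `r ∈ [0,∞]`. -/
def sublevel (V : ES n → ℝ) (N : Set (ES n)) (r : ℝ≥0∞) : Set (ES n) :=
  {x ∈ N | ENNReal.ofReal (V x) ≤ r}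

/-- `F` is outer semicontinuous on `S`. -/
def OuterSemicontinuousOn (F : ES n → Set (ES n)) (S : Set (ES n)) : Prop :=
  ∀ x ∈ S, ∀ xs : ℕ → ES n, ∀ ys : ℕ → ES n, (∀ i, xs i ∈ S) → (∀ i, ys i ∈ F (xs i)) →
    Tendsto xs atTop (𝓝 x) → ∀ y : ES n, Tendsto ys atTop (𝓝 y) → y ∈ F x

/-- `F` is locally bounded on `S`. -/
def LocallyBoundedOn (F : ES n → Set (ES n)) (S : Set (ES n)) : Prop :=
  ∀ x ∈ S, ∃ U ∈ 𝓝 x, Bornology.IsBounded (⋃ z ∈ U ∩ S, F z)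

/-- The (Bouligand) tangent cone `T_S(x)`: all `w` for which there exist `x_i ∈ S`,
`x_i → x`, `τ_i > 0`, `τ_i ↓ 0` with `(x_i − x)/τ_i → w`. -/
def BouligandTangentCone (S : Set (ES n)) (x : ES n) : Set (ES n) :=
  {w | ∃ xs : ℕ → ES n, ∃ τ : ℕ → ℝ, (∀ i, xs i ∈ S) ∧ (∀ i, 0 < τ i) ∧
    Tendsto xs atTop (𝓝 x) ∧ Tendsto τ atTop (𝓝 0) ∧
    Tendsto (fun i => (τ i)⁻¹ • (xs i - x)) atTop (𝓝 w)}

/-- `B` is a barrier function candidate with respect to `K` for `H`. -/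
def BarrierCandidate (H : HybridSystem n) (B : ES n → ℝ) (K : Set (ES n)) : Prop :=
  (∀ x ∈ K, B x ≤ 0) ∧
  ∀ x ∈ (H.C ∪ H.D ∪ ⋃ y ∈ H.D, H.G y) \ K, 0 < B x

/-- The set-valued map `F` is locally Lipschitz on `S`. -/
def SetValuedLocallyLipschitzOn (F : ES n → Set (ES n)) (S : Set (ES n)) : Prop :=
  ∀ x ∈ S, ∃ L : ℝ, 0 ≤ L ∧ ∃ U ∈ 𝓝 x,
    ∀ y ∈ U ∩ S, ∀ z ∈ U ∩ S, ∀ v ∈ F y, ∃ w ∈ F z, ‖v - w‖ ≤ L * ‖y - z‖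

/-!
Jumps cannot leave `K`: a jump from `D ∩ K` lands in `C ∪ D`, where `B > 0` off `K`, while
condition (2) gives `B ≤ 0`. Flows cannot leave `K` either. Near a point of `∂K ⊆ U`, wherever the
arc `ψ` is outside `K` it lies in `C ∩ (U \ K)`, and the difference quotients of `ψ` have limit
points in `F(x) ∩ T_C(x)` (local boundedness, outer semicontinuity and convexity of `F`, since
the quotients are averages of velocities). By (1) the lower right Dini derivative of `B ∘ ψ` is
then `≤ 0` wherever `B ∘ ψ > 0`, and a fencing argument keeps `B ∘ ψ ≤ 0`, i.e. `ψ ∈ K`.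
Induction on the jump counter concludes.
-/

theorem image_nonpos_of_liminf_slope_right_nonpos_of_pos {g : ℝ → ℝ} {a b : ℝ}
    (hg : ContinuousOn g (Icc a b)) (ha : g a ≤ 0)
    (hslope : ∀ t ∈ Ico a b, 0 < g t → ∀ r > 0, ∃ᶠ u in 𝓝[>] t, slope g t u < r) :
    ∀ t ∈ Icc a b, g t ≤ 0 := by
  -- fence `g` below the line `ε * (1 + (u - a))`, whose slope `ε` beats the slopes of `g`
  -- wherever the two graphs meet
  have fence : ∀ ε > 0, Icc a b ⊆ {u | g u ≤ ε * (1 + (u - a))} := by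
    intro ε hε
    refine IsClosed.Icc_subset_of_forall_exists_gt ?_ (by simpa using ha.trans hε.le) ?_
    · rw [inter_comm]
      exact isClosed_Icc.isClosed_le hg (by fun_prop)
    rintro x ⟨hx, hxab⟩ y hy
    rcases (show g x ≤ _ from hx).lt_or_eq with hlt | heq
    · -- the line increases, so staying below its value at `x` suffices
      have hev : ∀ᶠ u in 𝓝[>] x, g u < ε * (1 + (x - a)) :=
        ((hg x (Ico_subset_Icc_self hxab)).mono_of_mem_nhdsWithin
          (Icc_mem_nhdsGT_of_mem hxab)).eventually (gt_mem_nhds hlt)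
      obtain ⟨z, hz, hzI⟩ := (hev.and (Ioc_mem_nhdsGT hy)).exists
      exact ⟨z, by show g z ≤ _; nlinarith [hzI.1], hzI⟩
    · have hpos : 0 < g x := heq ▸ by nlinarith [hxab.1]
      obtain ⟨z, hz, hzI⟩ := ((hslope x hxab hpos ε hε).and_eventually (Ioc_mem_nhdsGT hy)).exists
      refine ⟨z, ?_, hzI⟩
      rw [slope_def_field, div_lt_iff₀ (sub_pos.2 hzI.1)] at hz
      show g z ≤ _
      nlinarith
  intro t ht
  refine le_of_forall_pos_le_add fun ε hε => ?_
  have hden : 0 < 1 + (t - a) := by linarith [ht.1]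
  have : g t ≤ ε / (1 + (t - a)) * (1 + (t - a)) := fence _ (div_pos hε hden) ht
  rwa [div_mul_cancel₀ _ hden.ne', ← zero_add ε] at this

theorem HasFDerivAt.tendsto_slope_comp {E F : Type*} [NormedAddCommGroup E] [NormedSpace ℝ E]
    [NormedAddCommGroup F] [NormedSpace ℝ F] {V : E → F} {V' : E →L[ℝ] F} {ψ : ℝ → E}
    {t : ℝ} {α : Type*} {l : Filter α} {τ : α → ℝ} {v : E} (hV : HasFDerivAt V V' (ψ t))
    (hψ : Tendsto (fun i => ψ (τ i)) l (𝓝 (ψ t)))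
    (hv : Tendsto (fun i => slope ψ t (τ i)) l (𝓝 v)) :
    Tendsto (fun i => slope (V ∘ ψ) t (τ i)) l (𝓝 (V' v)) := by
  have := hV.hasFDerivWithinAt (s := univ).lim (c := fun i => (τ i - t)⁻¹)
    (d := fun i => ψ (τ i) - ψ t) (tendsto_sub_nhds_zero_iff.2 hψ)
    (Eventually.of_forall fun _ => mem_univ _) hv
  simpa only [add_sub_cancel, slope_def_module, Function.comp_apply] using this

section SetValued

variable {F : ES n → Set (ES n)} {S : Set (ES n)} {x : ES n}

theorem OuterSemicontinuousOn.isClosed (hF : OuterSemicontinuousOn F S) (hx : x ∈ S) :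
    IsClosed (F x) :=
  isSeqClosed_iff_isClosed.1 fun _ y hys hy =>
    hF x hx (fun _ => x) _ (fun _ => hx) hys tendsto_const_nhds y hy

theorem OuterSemicontinuousOn.exists_nhds_subset_cthickening (hF : OuterSemicontinuousOn F S)
    (hlb : LocallyBoundedOn F S) (hx : x ∈ S) {ε : ℝ} (hε : 0 < ε) :
    ∃ W ∈ 𝓝 x, ∀ z ∈ W ∩ S, F z ⊆ Metric.cthickening ε (F x) := by
  obtain ⟨V, hV, hVb⟩ := hlb x hx
  by_contra! hbad
  have hball : ∀ i : ℕ, V ∩ Metric.ball x (1 / (i + 1)) ∈ 𝓝 x := fun i =>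
    inter_mem hV (Metric.ball_mem_nhds x Nat.one_div_pos_of_nat)
  choose z hz hzF using fun i => hbad _ (hball i)
  choose w hwF hw using fun i => not_subset.1 (hzF i)
  have hzx : Tendsto z atTop (𝓝 x) := tendsto_iff_dist_tendsto_zero.2 <|
    squeeze_zero (fun _ => dist_nonneg) (fun i => (hz i).1.2.le)
      tendsto_one_div_add_atTop_nhds_zero_nat
  obtain ⟨y, -, φ, hφ, hwy⟩ := tendsto_subseq_of_bounded hVb fun i =>
    mem_biUnion ⟨(hz i).1.1, (hz i).2⟩ (hwF i)
  have hy : y ∈ F x := hF x hx (z ∘ φ) (w ∘ φ) (fun i => (hz _).2) (fun i => hwF _)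
    (hzx.comp hφ.tendsto_atTop) y hwy
  obtain ⟨i, hi⟩ := (hwy.eventually (Metric.ball_mem_nhds y hε)).exists
  exact hw (φ i) <| Metric.thickening_subset_cthickening _ _ <|
    Metric.mem_thickening_iff.2 ⟨y, hy, hi⟩

end SetValued

/-- A single flow interval `[a, b]` of a solution to a hybrid system, with velocity `f`. -/
structure IsFlowOn {E : Type*} [NormedAddCommGroup E] [NormedSpace ℝ E] (C : Set E)
    (F : E → Set E) (ψ f : ℝ → E) (a b : ℝ) : Prop where
  mem : ∀ u ∈ Ioo a b, ψ u ∈ C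
  ae_mem : ∀ᵐ u, u ∈ Ioo a b → f u ∈ F (ψ u)
  intervalIntegrable : IntervalIntegrable f volume a b
  eq_add_integral : ∀ u ∈ Icc a b, ∀ v ∈ Icc a b, ψ v = ψ u + ∫ w in u..v, f w

namespace IsFlowOn

section

variable {E : Type*} [NormedAddCommGroup E] [NormedSpace ℝ E] {C : Set E} {F : E → Set E}
  {ψ f : ℝ → E} {a b : ℝ}

theorem mono_left (hψ : IsFlowOn C F ψ f a b) {t : ℝ} (ht : t ∈ Icc a b) :
    IsFlowOn C F ψ f t b where
  mem u hu := hψ.mem u ⟨ht.1.trans_lt hu.1, hu.2⟩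
  ae_mem := hψ.ae_mem.mono fun u hu hmem => hu ⟨ht.1.trans_lt hmem.1, hmem.2⟩
  intervalIntegrable := hψ.intervalIntegrable.mono_set <| by
    rw [uIcc_of_le ht.2, uIcc_of_le (ht.1.trans ht.2)]
    exact Icc_subset_Icc_left ht.1
  eq_add_integral u hu v hv :=
    hψ.eq_add_integral u ⟨ht.1.trans hu.1, hu.2⟩ v ⟨ht.1.trans hv.1, hv.2⟩

theorem continuousOn (hψ : IsFlowOn C F ψ f a b) (hab : a ≤ b) : ContinuousOn ψ (Icc a b) := by
  have hprim := intervalIntegral.continuousOn_primitive_interval' hψ.intervalIntegrable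
    left_mem_uIcc
  rw [uIcc_of_le hab] at hprim
  exact (continuousOn_const.add hprim).congr fun v hv =>
    hψ.eq_add_integral a (left_mem_Icc.2 hab) v hv

theorem tendsto_nhdsGT (hψ : IsFlowOn C F ψ f a b) (hab : a < b) :
    Tendsto ψ (𝓝[>] a) (𝓝 (ψ a)) :=
  ((hψ.continuousOn hab.le a (left_mem_Icc.2 hab.le)).mono_of_mem_nhdsWithin
    (Icc_mem_nhdsGT hab)).tendsto

-- Slopes of `ψ` are averages of the velocity.
theorem eventually_slope_mem [CompleteSpace E] (hψ : IsFlowOn C F ψ f a b) (hab : a < b)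
    {S : Set E} (hSconv : Convex ℝ S) (hS : IsClosed S) {W : Set E} (hW : W ∈ 𝓝 (ψ a))
    (hWS : ∀ z ∈ W ∩ C, F z ⊆ S) : ∀ᶠ u in 𝓝[>] a, slope ψ a u ∈ S := by
  obtain ⟨c, hac, hc⟩ := mem_nhdsGT_iff_exists_Ioc_subset.1 <|
    (hψ.tendsto_nhdsGT hab).eventually (mem_of_superset hW fun _ => id)
  filter_upwards [Ioo_mem_nhdsGT (lt_min hac hab)] with v hv
  have hvb : v ≤ b := hv.2.le.trans (min_le_right _ _)
  have hvol : volume (Ioc a v) = ENNReal.ofReal (v - a) := Real.volume_Ioc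
  have hslope : slope ψ a v = ⨍ u in a..v, f u := by
    rw [interval_average_eq, slope_def_module,
      hψ.eq_add_integral a (left_mem_Icc.2 hab.le) v ⟨hv.1.le, hvb⟩, add_sub_cancel_left]
  rw [hslope, uIoc_of_le hv.1.le]
  refine hSconv.set_average_mem hS (by simp [hvol, hv.1]) (by simp [hvol]) ?_ ?_
  · refine (ae_restrict_iff' measurableSet_Ioc).2 (hψ.ae_mem.mono fun u hu hmem => ?_)
    have hub : u < b := hmem.2.trans_lt (hv.2.trans_le (min_le_right _ _))
    refine hWS _ ⟨hc ⟨hmem.1, hmem.2.trans (hv.2.le.trans (min_le_left _ _))⟩,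
      hψ.mem u ⟨hmem.1, hub⟩⟩ (hu ⟨hmem.1, hub⟩)
  · exact ((intervalIntegrable_iff_integrableOn_Ioc_of_le hab.le).1
      hψ.intervalIntegrable).mono_set (Ioc_subset_Ioc_right hvb)

end

variable {C K U : Set (ES n)} {F : ES n → Set (ES n)} {ψ f : ℝ → ES n} {a b : ℝ}
  {B : ES n → ℝ}

theorem exists_tendsto_slope (hψ : IsFlowOn C F ψ f a b) (hab : a < b) (ha : ψ a ∈ C)
    (hosc : OuterSemicontinuousOn F C) (hconv : Convex ℝ (F (ψ a)))
    (hlb : LocallyBoundedOn F C) :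
    ∃ τ : ℕ → ℝ, Tendsto τ atTop (𝓝[>] a) ∧
      ∃ v ∈ F (ψ a) ∩ BouligandTangentCone C (ψ a),
        Tendsto (fun i => slope ψ a (τ i)) atTop (𝓝 v) := by
  obtain ⟨τ, -, hτab, hτa⟩ := exists_seq_strictAnti_tendsto' hab
  have hτ : Tendsto τ atTop (𝓝[>] a) :=
    tendsto_nhdsWithin_iff.2 ⟨hτa, Eventually.of_forall fun i => (hτab i).1⟩
  obtain ⟨V, hV, hVb⟩ := hlb (ψ a) ha
  obtain ⟨M, hM⟩ := hVb.subset_closedBall 0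
  have hbdd : ∀ᶠ u in 𝓝[>] a, slope ψ a u ∈ Metric.closedBall 0 M :=
    hψ.eventually_slope_mem hab (convex_closedBall _ _) Metric.isClosed_closedBall hV
      fun z hz => (subset_biUnion_of_mem hz).trans hM
  obtain ⟨v, -, φ, hφ, hv⟩ := tendsto_subseq_of_frequently_bounded Metric.isBounded_closedBall
    (hτ.eventually hbdd).frequently
  have hτφ : Tendsto (τ ∘ φ) atTop (𝓝[>] a) := hτ.comp hφ.tendsto_atTop
  refine ⟨τ ∘ φ, hτφ, v, ⟨?_, ?_⟩, hv⟩
  · rw [← (hosc.isClosed ha).closure_eq, Metric.closure_eq_iInter_cthickening]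
    refine mem_iInter₂.2 fun ε hε => ?_
    obtain ⟨W, hW, hWS⟩ := hosc.exists_nhds_subset_cthickening hlb ha hε
    exact Metric.isClosed_cthickening.mem_of_tendsto hv <| hτφ.eventually <|
      hψ.eventually_slope_mem hab (hconv.cthickening ε) Metric.isClosed_cthickening hW hWS
  · refine ⟨ψ ∘ τ ∘ φ, fun i => τ (φ i) - a, fun i => hψ.mem _ (hτab _),
      fun i => sub_pos.2 (hτab _).1, (hψ.tendsto_nhdsGT hab).comp hτφ, ?_, hv⟩
    simpa using (tendsto_sub_nhds_zero_iff.2 (hτa.comp hφ.tendsto_atTop))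

theorem frequently_slope_comp_lt (hψ : IsFlowOn C F ψ f a b) (hab : a < b) (ha : ψ a ∈ C)
    (hosc : OuterSemicontinuousOn F C) (hconv : Convex ℝ (F (ψ a)))
    (hlb : LocallyBoundedOn F C) {V : ES n → ℝ} (hV : DifferentiableAt ℝ V (ψ a))
    (hdir : ∀ η ∈ F (ψ a) ∩ BouligandTangentCone C (ψ a), fderiv ℝ V (ψ a) η ≤ 0)
    {r : ℝ} (hr : 0 < r) : ∃ᶠ u in 𝓝[>] a, slope (V ∘ ψ) a u < r := by
  obtain ⟨τ, hτ, v, hv, hslope⟩ := hψ.exists_tendsto_slope hab ha hosc hconv hlb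
  have hlim := hV.hasFDerivAt.tendsto_slope_comp ((hψ.tendsto_nhdsGT hab).comp hτ) hslope
  exact hτ.frequently (hlim.eventually (gt_mem_nhds ((hdir v hv).trans_lt hr))).frequently


theorem eventually_mem_of_barrier (hψ : IsFlowOn C F ψ f a b) (hab : a < b) (ha : ψ a ∈ K)
    (hosc : OuterSemicontinuousOn F C) (hconv : ∀ x ∈ C, Convex ℝ (F x))
    (hlb : LocallyBoundedOn F C) (hB : Differentiable ℝ B) (hBK : ∀ x ∈ K, B x ≤ 0)
    (hBC : ∀ x ∈ C \ K, 0 < B x) (hUopen : IsOpen U) (hU : frontier K ⊆ U)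
    (hdir : ∀ x ∈ C ∩ (U \ K), ∀ η ∈ F x ∩ BouligandTangentCone C x, fderiv ℝ B x η ≤ 0) :
    ∀ᶠ u in 𝓝[>] a, ψ u ∈ K := by
  have hKU : K ⊆ U ∪ interior K := by
    rw [union_comm]
    exact subset_closure.trans <| (closure_eq_interior_union_frontier K).subset.trans <|
      union_subset_union_right _ hU
  obtain ⟨c, hac, hc⟩ := mem_nhdsGT_iff_exists_Ioo_subset.1 <| (hψ.tendsto_nhdsGT hab).eventually
    ((hUopen.union isOpen_interior).mem_nhds (hKU ha))
  have had : a < min c b := lt_min hac hab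
  have hnonpos : ∀ t ∈ Icc a (min c b), B (ψ t) ≤ 0 := by
    refine image_nonpos_of_liminf_slope_right_nonpos_of_pos (hB.continuous.comp_continuousOn
      ((hψ.continuousOn hab.le).mono (Icc_subset_Icc_right (min_le_right _ _)))) (hBK _ ha) ?_
    intro t ht hpos r hr
    have htK : ψ t ∉ K := fun h => (hBK _ h).not_gt hpos
    have hat : a < t := ht.1.lt_of_ne (by rintro rfl; exact htK ha)
    have htb : t < b := ht.2.trans_le (min_le_right _ _)
    have htC : ψ t ∈ C := hψ.mem t ⟨hat, htb⟩
    have htU : ψ t ∈ U :=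
      (hc ⟨hat, ht.2.trans_le (min_le_left _ _)⟩).resolve_right fun h => htK (interior_subset h)
    exact (hψ.mono_left ⟨ht.1, htb.le⟩).frequently_slope_comp_lt htb htC hosc (hconv _ htC) hlb
      (hB _) (hdir _ ⟨htC, htU, htK⟩) hr
  filter_upwards [Ioo_mem_nhdsGT had] with u hu
  by_contra huK
  exact (hnonpos u (Ioo_subset_Icc_self hu)).not_gt
    (hBC _ ⟨hψ.mem u ⟨hu.1, hu.2.trans_le (min_le_right _ _)⟩, huK⟩)

theorem mapsTo_of_barrier (hψ : IsFlowOn C F ψ f a b) (hab : a ≤ b) (ha : ψ a ∈ K)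
    (hKcl : IsClosed K) (hosc : OuterSemicontinuousOn F C) (hconv : ∀ x ∈ C, Convex ℝ (F x))
    (hlb : LocallyBoundedOn F C) (hB : Differentiable ℝ B) (hBK : ∀ x ∈ K, B x ≤ 0)
    (hBC : ∀ x ∈ C \ K, 0 < B x) (hUopen : IsOpen U) (hU : frontier K ⊆ U)
    (hdir : ∀ x ∈ C ∩ (U \ K), ∀ η ∈ F x ∩ BouligandTangentCone C x, fderiv ℝ B x η ≤ 0) :
    MapsTo ψ (Icc a b) K := by
  refine IsClosed.Icc_subset_of_forall_mem_nhdsWithin (s := ψ ⁻¹' K) ?_ ha fun x hx => ?_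
  · rw [inter_comm]
    exact (hψ.continuousOn hab).preimage_isClosed_of_isClosed isClosed_Icc hKcl
  · exact (hψ.mono_left (Ico_subset_Icc_self hx.2)).eventually_mem_of_barrier hx.2.2 hx.1 hosc
      hconv hlb hB hBK hBC hUopen hU hdir

end IsFlowOn

theorem IsHybridTimeDomain.exists_flow_interval {E : Set (ℝ × ℕ)} (hE : IsHybridTimeDomain E)
    {t : ℝ} {j : ℕ} (h : (t, j) ∈ E) :
    ∃ e ≤ t, (∀ u ∈ Icc e t, (u, j) ∈ E) ∧ (j = 0 → e = 0) ∧ ∀ i, j = i + 1 → (e, i) ∈ E := by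
  obtain ⟨τ, hτ0, hτend, hτmono, hτE⟩ := hE.2 (t, j) h
  dsimp only at hτend hτE
  have het : τ j ≤ t := hτend ▸ hτmono j le_rfl
  refine ⟨τ j, het, fun u hu => ((hτE u j).2 ⟨le_rfl, hu.1, hτend ▸ hu.2⟩).1,
    fun hj => hj ▸ hτ0, fun i hi => ((hτE (τ j) i).2 ⟨by omega, ?_, by rw [hi]⟩).1⟩
  rw [hi]
  exact hτmono i (by omega)

theorem IsSolution.exists_isFlowOn {H : HybridSystem n} {s : HybridArc n} (hs : IsSolution H s)
    {j : ℕ} {a b : ℝ} (hab : a ≤ b) (hdom : ∀ u ∈ Icc a b, (u, j) ∈ s.dom) :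
    ∃ f, IsFlowOn H.C H.F (fun u => s.toFun u j) f a b := by
  obtain ⟨f, hC, hF, hint⟩ := hs.flow j
  exact ⟨f, {
    mem := fun u hu => hC u <| interior_maximal (fun w hw => hdom w (Ioo_subset_Icc_self hw))
      isOpen_Ioo hu
    ae_mem := hF.mono fun u hu hmem => hu (hdom u (Ioo_subset_Icc_self hmem))
    intervalIntegrable := (hint a b (hdom a (left_mem_Icc.2 hab)) (hdom b (right_mem_Icc.2 hab))).1
    eq_add_integral := fun u hu v hv => (hint u v (hdom u hu) (hdom v hv)).2 }⟩

theorem always_sufficient_barrier_general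
    (n : ℕ) (H : HybridSystem n) (K : Set (ES n))
    (hKcl : IsClosed K)
    (hFosc : OuterSemicontinuousOn H.F H.C)
    (hFconv : ∀ x ∈ H.C, Convex ℝ (H.F x))
    (hFlb : LocallyBoundedOn H.F H.C)
    (B : ES n → ℝ) (hB : ContDiff ℝ 1 B) (hBc : BarrierCandidate H B K)
    (U : Set (ES n)) (hUopen : IsOpen U) (hU : frontier K ⊆ U)
    (h1 : ∀ x ∈ H.C ∩ (U \ K), ∀ η ∈ H.F x ∩ BouligandTangentCone H.C x,
      fderiv ℝ B x η ≤ 0)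
    (h2 : ∀ x ∈ H.D ∩ K, ∀ η ∈ H.G x, B η ≤ 0)
    (h3 : (⋃ x ∈ H.D ∩ K, H.G x) ⊆ H.C ∪ H.D) :
    ∀ s : HybridArc n, IsMaximal H s → s.toFun 0 0 ∈ K →
      (∀ t : ℝ, ∀ j : ℕ, (t, j) ∈ s.dom → SatAlwaysAt s K t j) ∧
      ∀ q ∈ s.dom, s.toFun q.1 q.2 ∈ K := by
  intro s hs hinit
  have hflow : ∀ {j e t}, e ≤ t → (∀ u ∈ Icc e t, (u, j) ∈ s.dom) → s.toFun e j ∈ K →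
      s.toFun t j ∈ K := fun het hdom he => by
    obtain ⟨f, hf⟩ := hs.1.exists_isFlowOn het hdom
    exact hf.mapsTo_of_barrier het he hKcl hFosc hFconv hFlb (hB.differentiable one_ne_zero)
      hBc.1 (fun x hx => hBc.2 x ⟨.inl (.inl hx.1), hx.2⟩) hUopen hU h1 (right_mem_Icc.2 het)
  have hjump : ∀ x ∈ H.D ∩ K, ∀ y ∈ H.G x, y ∈ K := fun x hx y hy => by
    by_contra hyK
    exact (h2 x hx y hy).not_gt (hBc.2 y ⟨.inl (h3 (mem_biUnion hx hy)), hyK⟩)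
  have hmem : ∀ j t, (t, j) ∈ s.dom → s.toFun t j ∈ K := by
    intro j
    induction j with
    | zero =>
      intro t ht
      obtain ⟨e, het, hdom, he0, -⟩ := s.htd.exists_flow_interval ht
      obtain rfl := he0 rfl
      exact hflow het hdom hinit
    | succ j ih =>
      intro t ht
      obtain ⟨e, het, hdom, -, hprev⟩ := s.htd.exists_flow_interval ht
      obtain ⟨hD, hG⟩ := hs.1.jump e j (hprev j rfl) (hdom e (left_mem_Icc.2 het))
      exact hflow het hdom (hjump _ ⟨hD, ih e (hprev j rfl)⟩ _ hG)
  exact ⟨fun _ _ _ t' j' h' _ => hmem j' t' h', fun q hq => hmem q.2 q.1 hq⟩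

/-- barrier-function sufficient conditions for `□p`. -/
theorem always_sufficient_barrier
    (n : ℕ) (H : HybridSystem n) (p : ES n → Prop) (K : Set (ES n))
    (hK : K = {x ∈ H.X | p x}) (hKcl : IsClosed K) (hKsub : K ⊆ H.C ∪ H.D)
    (hFosc : OuterSemicontinuousOn H.F H.C)
    (hFne : ∀ x ∈ H.C, (H.F x).Nonempty)
    (hFconv : ∀ x ∈ H.C, Convex ℝ (H.F x))
    (hFlb : LocallyBoundedOn H.F H.C)
    (hGne : ∀ x ∈ H.D, (H.G x).Nonempty)
    (B : ES n → ℝ) (hB : ContDiff ℝ 1 B) (hBc : BarrierCandidate H B K)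
    (U : Set (ES n)) (hUopen : IsOpen U) (hU : frontier K ⊆ U)
    (h1 : ∀ x ∈ H.C ∩ (U \ K), ∀ η ∈ H.F x ∩ BouligandTangentCone H.C x,
      fderiv ℝ B x η ≤ 0)
    (h2 : ∀ x ∈ H.D ∩ K, ∀ η ∈ H.G x, B η ≤ 0)
    (h3 : (⋃ x ∈ H.D ∩ K, H.G x) ⊆ H.C ∪ H.D) :
    ∀ s : HybridArc n, IsMaximal H s → s.toFun 0 0 ∈ K →
      (∀ t : ℝ, ∀ j : ℕ, (t, j) ∈ s.dom → SatAlwaysAt s K t j) ∧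
      ∀ q ∈ s.dom, s.toFun q.1 q.2 ∈ K :=
  always_sufficient_barrier_general n H K hKcl hFosc hFconv hFlb B hB hBc U hUopen hU h1 h2 h3
end
end

section
/- Let H = (C,F,D,G) be a hybrid system on X ⊆ ℝ^n and p an atomic proposition whose truth set K = {x ∈ X : p(x) = 1} is nonempty and closed. Suppose there is an open set N ⊇ K with G(N) ⊆ N ⊆ X, a continuous function V : N → [0,∞) that is locally Lipschitz on an open neighborhood of C ∩ N, and a constant c > 0 such that: (2.1) for every x ∈ N ∩ (closure(C) ∪ D) with p(x) = 0, every maximal solution φ with φ(0,0) = x satisfies ceil(V(x)/c) ≤ sup_{(t,j)∈dom φ} j; and (2.2) V is positive definite with respect to K, u_C(x) ≤ 0 for every x ∈ (C ∩ N) \ K, and u_D(x) ≤ −min{c, V(x)} for every x ∈ (D ∩ N) \ K. Then for every r ∈ [0,∞] such that L_V(r) is a compact subset of N, every maximal solution φ to H with φ(0,0) ∈ L_V(r) ∩ (closure(C) ∪ D) satisfies the formula ◇p at (t,j) = (0,0), i.e., there exists (t',j') ∈ dom φ with φ(t',j') ∈ K. -/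
open Set Filter Topology MeasureTheory
open scoped ENNReal NNReal

noncomputable section

variable {n : ℕ}

/-!
Along a flow that stays in `N \ K`, `V ∘ φ` is absolutely continuous on compact subintervals
(`φ` is the primitive of an integrable function and `V` is Lipschitz near the compact path), and
wherever it is differentiable its derivative is at most the Clarke derivative `V°(φ, φ̇) ≤ 0`.
So `V` does not increase during flows, and a closed sublevel set contained in `N` cannot be left.
At a jump outside `K`, `V` drops by at least `c`: a drop by `V(x) < c` would land in `K`.
If `φ` never met `K`, then after `j` jumps `V ≤ V(φ(0,0)) - j c`, while (2.1) supplies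
`j ≥ V(φ(0,0)) / c` jumps, forcing `V ≤ 0` outside `K`.
-/

theorem AbsolutelyContinuousOnInterval.of_dist_le_mul {X Y : Type*} [PseudoMetricSpace X]
    [PseudoMetricSpace Y] {f : ℝ → X} {g : ℝ → Y} {a b K : ℝ}
    (hg : AbsolutelyContinuousOnInterval g a b)
    (hfg : ∀ x ∈ uIcc a b, ∀ y ∈ uIcc a b, dist (f x) (f y) ≤ K * dist (g x) (g y)) :
    AbsolutelyContinuousOnInterval f a b := by
  have hK := Tendsto.const_mul K hg
  rw [mul_zero] at hK
  refine squeeze_zero' (Eventually.of_forall fun _ ↦ Finset.sum_nonneg fun _ _ ↦ dist_nonneg)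
    ?_ hK
  filter_upwards [eventually_inf_principal.mpr (Eventually.of_forall fun _ h ↦ h)] with E hE
  rw [Finset.mul_sum]
  exact Finset.sum_le_sum fun i hi ↦ hfg _ (hE.1 i hi).1 _ (hE.1 i hi).2

theorem AbsolutelyContinuousOnInterval.le_of_ae_deriv_nonpos {f : ℝ → ℝ} {a b : ℝ}
    (hf : AbsolutelyContinuousOnInterval f a b) (hab : a ≤ b)
    (hf' : ∀ᵐ t, t ∈ Ioo a b → deriv f t ≤ 0) : f b ≤ f a := by
  have : ∫ t in a..b, deriv f t ≤ 0 := by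
    rw [intervalIntegral.integral_of_le hab, integral_Ioc_eq_integral_Ioo]
    exact setIntegral_nonpos_of_ae_restrict ((ae_restrict_iff' measurableSet_Ioo).2 hf')
  linarith [hf.integral_deriv_eq_sub]

theorem eventually_slope_lt_of_clarkeDeriv_lt {V : ES n → ℝ} {x v : ES n} {L : ℝ≥0}
    {W : Set (ES n)} (hW : W ∈ 𝓝 x) (hV : LipschitzOnWith L V W) {ε : ℝ}
    (hε : clarkeDeriv V x v < ε) :
    ∀ᶠ τ in 𝓝[>] (0 : ℝ), (V (x + τ • v) - V x) / τ < ε := by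
  have hshift : Tendsto (fun q : ES n × ℝ ↦ q.1 + q.2 • v) (𝓝 x ×ˢ 𝓝[>] 0) (𝓝 x) := by
    have := (continuous_fst.add (continuous_snd.smul continuous_const)).tendsto (x, (0 : ℝ))
      (f := fun q : ES n × ℝ ↦ q.1 + q.2 • v)
    rw [nhds_prod_eq] at this
    simpa using this.mono_left (Filter.prod_mono le_rfl nhdsWithin_le_nhds)
  have hbdd : IsBoundedUnder (· ≤ ·) (𝓝 x ×ˢ 𝓝[>] 0)
      (fun q : ES n × ℝ ↦ (V (q.1 + q.2 • v) - V q.1) / q.2) := by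
    refine ⟨L * ‖v‖, eventually_map.2 ?_⟩
    filter_upwards [tendsto_fst.eventually hW, hshift.eventually hW,
      tendsto_snd.eventually self_mem_nhdsWithin] with q hq hqv (hq0 : 0 < q.2)
    rw [div_le_iff₀ hq0]
    calc V (q.1 + q.2 • v) - V q.1 ≤ dist (V (q.1 + q.2 • v)) (V q.1) := le_abs_self _
      _ ≤ L * dist (q.1 + q.2 • v) q.1 := hV.dist_le_mul _ hqv _ hq
      _ = L * ‖v‖ * q.2 := by
        rw [dist_eq_norm, add_sub_cancel_left, norm_smul, Real.norm_of_nonneg hq0.le]; ring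
  exact (tendsto_const_nhds.prodMk tendsto_id).eventually (eventually_lt_of_limsup_lt hε hbdd)

theorem HasDerivAt.le_clarkeDeriv_comp {γ : ℝ → ES n} {v : ES n} {t d : ℝ} {V : ES n → ℝ}
    {L : ℝ≥0} {W : Set (ES n)} (hγ : HasDerivAt γ v t) (hW : W ∈ 𝓝 (γ t))
    (hV : LipschitzOnWith L V W) (hd : HasDerivAt (V ∘ γ) d t) :
    d ≤ clarkeDeriv V (γ t) v := by
  refine le_of_forall_gt_imp_ge_of_dense fun ε hε ↦ ?_
  set err : ℝ → ES n := fun τ ↦ τ⁻¹ • (γ (t + τ) - γ t) - v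
  have herr : Tendsto err (𝓝[>] 0) (𝓝 0) := by
    simpa [err] using hγ.tendsto_slope_zero_right.sub_const v
  have hγnear : Tendsto (fun τ ↦ γ (t + τ)) (𝓝[>] 0) (𝓝 (γ t)) := by
    refine Tendsto.mono_left ?_ nhdsWithin_le_nhds
    have : Tendsto (fun τ : ℝ ↦ t + τ) (𝓝 0) (𝓝 t) := by
      simpa using (continuous_const_add t).tendsto 0
    exact hγ.continuousAt.tendsto.comp this
  have hvnear : Tendsto (fun τ : ℝ ↦ γ t + τ • v) (𝓝[>] 0) (𝓝 (γ t)) := by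
    refine Tendsto.mono_left ?_ nhdsWithin_le_nhds
    simpa using (continuous_const.add (continuous_id.smul continuous_const)).tendsto (0 : ℝ)
      (f := fun τ : ℝ ↦ γ t + τ • v)
  have hbound : ∀ᶠ τ in 𝓝[>] 0, τ⁻¹ • ((V ∘ γ) (t + τ) - (V ∘ γ) t) - L * ‖err τ‖ ≤ ε := by
    filter_upwards [eventually_slope_lt_of_clarkeDeriv_lt hW hV hε,
      hγnear.eventually hW, hvnear.eventually hW, self_mem_nhdsWithin]
      with τ hslope hγW hvW (hτ : 0 < τ)
    have hsplit : γ (t + τ) - (γ t + τ • v) = τ • err τ := by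
      simp only [err, smul_sub, smul_inv_smul₀ hτ.ne']; abel
    have hlip : V (γ (t + τ)) - V (γ t + τ • v) ≤ L * (τ * ‖err τ‖) := by
      calc _ ≤ dist (V (γ (t + τ))) (V (γ t + τ • v)) := le_abs_self _
        _ ≤ L * dist (γ (t + τ)) (γ t + τ • v) := hV.dist_le_mul _ hγW _ hvW
        _ = L * (τ * ‖err τ‖) := by
          rw [dist_eq_norm, hsplit, norm_smul, Real.norm_of_nonneg hτ.le]
    rw [div_lt_iff₀ hτ] at hslope
    have : τ⁻¹ * (V (γ (t + τ)) - V (γ t)) ≤ ε + L * ‖err τ‖ := by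
      rw [inv_mul_le_iff₀ hτ]
      linarith
    simpa only [smul_eq_mul, Function.comp_apply, sub_le_iff_le_add] using this
  have hlim := (hd.tendsto_slope_zero_right.sub (herr.norm.const_mul (L : ℝ)))
  simp only [norm_zero, mul_zero, sub_zero] at hlim
  exact le_of_tendsto hlim hbound

theorem ContinuousOn.le_of_antitoneOn_Ioo {g : ℝ → ℝ} {a b : ℝ} (hab : a ≤ b)
    (hg : ContinuousOn g (Icc a b)) (hmono : AntitoneOn g (Ioo a b)) : g b ≤ g a := by
  rcases hab.eq_or_lt with rfl | hlt
  · rfl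
  obtain ⟨m, ham, hmb⟩ := exists_between hlt
  have hb : Tendsto g (𝓝[<] b) (𝓝 (g b)) := by
    rw [← nhdsWithin_Ioo_eq_nhdsLT hlt]
    exact (hg b (right_mem_Icc.2 hab)).mono Ioo_subset_Icc_self
  have ha : Tendsto g (𝓝[>] a) (𝓝 (g a)) := by
    rw [← nhdsWithin_Ioo_eq_nhdsGT hlt]
    exact (hg a (left_mem_Icc.2 hab)).mono Ioo_subset_Icc_self
  calc g b ≤ g m := le_of_tendsto hb <| mem_of_superset (Ioo_mem_nhdsLT hmb) fun s hs ↦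
        hmono ⟨ham, hmb⟩ ⟨ham.trans hs.1, hs.2⟩ hs.1.le
    _ ≤ g a := ge_of_tendsto ha <| mem_of_superset (Ioo_mem_nhdsGT ham) fun s hs ↦
        hmono ⟨hs.1, hs.2.trans hmb⟩ ⟨ham, hmb⟩ hs.2.le

theorem continuousOn_of_eq_add_integral {E : Type*} [NormedAddCommGroup E] [NormedSpace ℝ E]
    {γ f : ℝ → E} {a b : ℝ} (hab : a ≤ b) (hf : IntervalIntegrable f volume a b)
    (hγ : ∀ t ∈ Icc a b, γ t = γ a + ∫ u in a..t, f u) :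
    ContinuousOn γ (Icc a b) := by
  have := (continuousOn_const (c := γ a)).add
    (intervalIntegral.continuousOn_primitive_interval ((intervalIntegrable_iff' (f := f)).1 hf))
  rw [uIcc_of_le hab] at this
  exact this.congr hγ

section Curve

variable {γ f : ℝ → ES n} {V : ES n → ℝ} {U : Set (ES n)} {a b : ℝ}

theorem comp_le_of_clarkeDeriv_nonpos_of_mapsTo_Icc (hab : a ≤ b)
    (hf : IntervalIntegrable f volume a b)
    (hγ : ∀ s ∈ Icc a b, ∀ t ∈ Icc a b, γ t = γ s + ∫ u in s..t, f u)
    (hU : IsOpen U) (hVU : LocallyLipschitzOn U V) (hγU : MapsTo γ (Icc a b) U)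
    (hdec : ∀ᵐ t, t ∈ Ioo a b → clarkeDeriv V (γ t) (f t) ≤ 0) :
    V (γ b) ≤ V (γ a) := by
  have ha : a ∈ Icc a b := left_mem_Icc.2 hab
  obtain ⟨L, hL⟩ := (hVU.mono hγU.image_subset).exists_lipschitzOnWith_of_compact
    (isCompact_Icc.image_of_continuousOn (continuousOn_of_eq_add_integral hab hf (hγ a ha)))
  have hdist : ∀ x ∈ uIcc a b, ∀ y ∈ uIcc a b,
      dist (V (γ x)) (V (γ y)) ≤ L * dist (∫ u in a..x, ‖f u‖) (∫ u in a..y, ‖f u‖) := by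
    intro x hx y hy
    rw [uIcc_of_le hab] at hx hy
    have hnorm (z) (hz : z ∈ Icc a b) : IntervalIntegrable (fun u ↦ ‖f u‖) volume a z :=
      hf.norm.mono_set (uIcc_subset_uIcc_left (by rwa [uIcc_of_le hab]))
    calc dist (V (γ x)) (V (γ y)) ≤ L * dist (γ x) (γ y) :=
          hL.dist_le_mul _ (mem_image_of_mem _ hx) _ (mem_image_of_mem _ hy)
      _ ≤ L * dist (∫ u in a..x, ‖f u‖) (∫ u in a..y, ‖f u‖) := by
        gcongr
        rw [dist_eq_norm, hγ y hy x hx, add_sub_cancel_left, Real.dist_eq,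
          intervalIntegral.integral_interval_sub_left (hnorm x hx) (hnorm y hy)]
        exact intervalIntegral.norm_integral_le_abs_integral_norm
  have hAC : AbsolutelyContinuousOnInterval (V ∘ γ) a b :=
    (hf.norm.absolutelyContinuousOnInterval_intervalIntegral left_mem_uIcc).of_dist_le_mul hdist
  refine hAC.le_of_ae_deriv_nonpos hab ?_
  filter_upwards [hf.ae_hasDerivAt_integral, hdec] with t hprim hclarke ht
  have htI : t ∈ uIcc a b := by rw [uIcc_of_le hab]; exact Ioo_subset_Icc_self ht
  have hγt : HasDerivAt γ (f t) t := by
    refine ((hprim htI a left_mem_uIcc).const_add (γ a)).congr_of_eventuallyEq ?_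
    filter_upwards [Icc_mem_nhds ht.1 ht.2] with u hu using hγ a ha u hu
  obtain ⟨L', W, hW, hLW⟩ := hVU (hγU (Ioo_subset_Icc_self ht))
  rw [hU.nhdsWithin_eq (hγU (Ioo_subset_Icc_self ht))] at hW
  by_cases hdiff : DifferentiableAt ℝ (V ∘ γ) t
  · exact (hγt.le_clarkeDeriv_comp hW hLW hdiff.hasDerivAt).trans (hclarke ht)
  · rw [deriv_zero_of_not_differentiableAt hdiff]

theorem comp_le_of_clarkeDeriv_nonpos (hab : a ≤ b) (hf : IntervalIntegrable f volume a b)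
    (hγ : ∀ s ∈ Icc a b, ∀ t ∈ Icc a b, γ t = γ s + ∫ u in s..t, f u)
    (hV : ContinuousOn (V ∘ γ) (Icc a b))
    (hU : IsOpen U) (hVU : LocallyLipschitzOn U V) (hγU : MapsTo γ (Ioo a b) U)
    (hdec : ∀ᵐ t, t ∈ Ioo a b → clarkeDeriv V (γ t) (f t) ≤ 0) :
    V (γ b) ≤ V (γ a) := by
  refine hV.le_of_antitoneOn_Ioo hab fun x hx y hy hxy ↦ ?_
  have hsub : Icc x y ⊆ Icc a b := Icc_subset_Icc hx.1.le hy.2.le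
  exact comp_le_of_clarkeDeriv_nonpos_of_mapsTo_Icc hxy
    (hf.mono_set (by rw [uIcc_of_le hab, uIcc_of_le hxy]; exact hsub))
    (fun s hs t ht ↦ hγ s (hsub hs) t (hsub ht)) hU hVU
    (fun t ht ↦ hγU ⟨hx.1.trans_le ht.1, ht.2.trans_lt hy.2⟩)
    (hdec.mono fun t h ht ↦ h ⟨hx.1.trans_le ht.1.le, ht.2.trans_le hy.2.le⟩)

end Curve

theorem mapsTo_sublevel_of_antitone {γ : ℝ → ES n} {V : ES n → ℝ} {N : Set (ES n)} {r : ℝ≥0∞}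
    {a b : ℝ} (hγ : ContinuousOn γ (Icc a b)) (hN : IsOpen N) (hS : IsClosed (sublevel V N r))
    (hmono : ∀ x ∈ Icc a b, ∀ y ∈ Icc a b, x ≤ y → MapsTo γ (Icc x y) N → V (γ y) ≤ V (γ x))
    (ha : γ a ∈ sublevel V N r) : MapsTo γ (Icc a b) (sublevel V N r) := by
  refine fun t ht ↦ IsClosed.Icc_subset_of_forall_mem_nhdsWithin (s := γ ⁻¹' sublevel V N r)
    ?_ ha ?_ ht
  · rw [inter_comm]
    exact hγ.preimage_isClosed_of_isClosed isClosed_Icc hS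
  rintro x ⟨hxS, hxa, hxb⟩
  have hnear : γ ⁻¹' N ∈ 𝓝[≥] x :=
    ((hγ x ⟨hxa, hxb.le⟩).mono_of_mem_nhdsWithin (mem_of_superset (Icc_mem_nhdsGE hxb)
      (Icc_subset_Icc_left hxa))) (hN.mem_nhds hxS.1)
  obtain ⟨u, hxu, hu⟩ := mem_nhdsGE_iff_exists_Ico_subset.1 hnear
  filter_upwards [Ioo_mem_nhdsGT (lt_min hxu hxb)] with y hy
  have hyN : MapsTo γ (Icc x y) N := fun z hz ↦
    hu ⟨hz.1, hz.2.trans_lt (hy.2.trans_le (min_le_left _ _))⟩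
  have hyb : y ∈ Icc a b := ⟨hxa.trans hy.1.le, hy.2.le.trans (min_le_right _ _)⟩
  exact ⟨hyN ⟨hy.1.le, le_rfl⟩, (ENNReal.ofReal_le_ofReal
    (hmono x ⟨hxa, hxb.le⟩ y hyb hy.1.le hyN)).trans hxS.2⟩

theorem IsHybridTimeDomain.mem_of_mem_Icc {E : Set (ℝ × ℕ)} (hE : IsHybridTimeDomain E)
    {a b t : ℝ} {j : ℕ} (ha : (a, j) ∈ E) (hb : (b, j) ∈ E) (ht : t ∈ Icc a b) : (t, j) ∈ E := by
  obtain ⟨τ, -, hτ, -, hmem⟩ := hE.2 (b, j) hb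
  have hτa := ((hmem a j).1 ⟨ha, ht.1.trans ht.2, le_rfl⟩).2.1
  exact ((hmem t j).2 ⟨le_rfl, hτa.trans ht.1, hτ ▸ ht.2⟩).1

theorem IsHybridTimeDomain.exists_jump_le {E : Set (ℝ × ℕ)} (hE : IsHybridTimeDomain E)
    {t : ℝ} {j : ℕ} (h : (t, j + 1) ∈ E) : ∃ t' ≤ t, (t', j) ∈ E ∧ (t', j + 1) ∈ E := by
  obtain ⟨τ, -, hτ, hstep, hmem⟩ := hE.2 (t, j + 1) h
  have hend : τ (j + 2) = t := hτ
  exact ⟨τ (j + 1), hend ▸ hstep (j + 1) le_rfl,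
    ((hmem _ j).2 ⟨j.le_succ, hstep j j.le_succ, le_rfl⟩).1,
    ((hmem _ (j + 1)).2 ⟨le_rfl, le_rfl, hstep (j + 1) le_rfl⟩).1⟩

theorem HybridArc.exists_mem_dom_le_snd {s : HybridArc n} {m : ℕ} (h : (m : ℝ≥0∞) ≤ domSupJ s) :
    ∃ q ∈ s.dom, m ≤ q.2 := by
  rcases m with _ | m
  · exact ⟨(0, 0), s.zero_mem, le_rfl⟩
  obtain ⟨q, hq, hmq⟩ := lt_biSup_iff.1 ((Nat.cast_lt.2 m.lt_succ_self).trans_le h)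
  exact ⟨q, hq, Nat.cast_lt.1 hmq⟩

theorem le_sub_of_uD_le_neg_min {H : HybridSystem n} {V : ES n → ℝ} {c : ℝ} {y z : ES n}
    (hy : uD_le H V y (-min c (V y))) (hz : z ∈ H.G y) (hVz : 0 < V z) : V z ≤ V y - c := by
  have := hy z hz
  rcases min_cases c (V y) with ⟨h, -⟩ | ⟨h, -⟩ <;> rw [h] at this <;> linarith

namespace IsSolution

variable {H : HybridSystem n} {s : HybridArc n}

theorem continuousOn_flow (hs : IsSolution H s) {j : ℕ} {a b : ℝ} (hab : a ≤ b)
    (ha : (a, j) ∈ s.dom) (hb : (b, j) ∈ s.dom) :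
    ContinuousOn (s.toFun · j) (Icc a b) := by
  obtain ⟨f, -, -, hint⟩ := hs.flow j
  exact continuousOn_of_eq_add_integral hab (hint a b ha hb).1 fun t ht ↦
    (hint a t ha (s.htd.mem_of_mem_Icc ha hb ht)).2

variable {V : ES n → ℝ} {N K : Set (ES n)}

theorem le_of_flow_mapsTo (hs : IsSolution H s) (hVcont : ContinuousOn V N)
    (hVlip : LocallyLipschitzOnNhdOf V (H.C ∩ N)) (hflow : ∀ x ∈ (H.C ∩ N) \ K, uC_le H V x 0)
    {j : ℕ} {a b : ℝ} (hab : a ≤ b) (ha : (a, j) ∈ s.dom) (hb : (b, j) ∈ s.dom)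
    (hNK : MapsTo (s.toFun · j) (Icc a b) (N \ K)) :
    V (s.toFun b j) ≤ V (s.toFun a j) := by
  obtain ⟨f, hC, hF, hint⟩ := hs.flow j
  have hdom (t) (ht : t ∈ Icc a b) : (t, j) ∈ s.dom := s.htd.mem_of_mem_Icc ha hb ht
  have hC' (t) (ht : t ∈ Ioo a b) : s.toFun t j ∈ H.C :=
    hC t (interior_maximal (fun u hu ↦ hdom u (Ioo_subset_Icc_self hu)) isOpen_Ioo ht)
  obtain ⟨U, hU, hCU, hlip⟩ := hVlip
  refine comp_le_of_clarkeDeriv_nonpos (γ := (s.toFun · j)) hab (hint a b ha hb).1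
    (fun x hx y hy ↦ (hint x y (hdom x hx) (hdom y hy)).2)
    (hVcont.comp (hs.continuousOn_flow hab ha hb) fun t ht ↦ (hNK ht).1) hU
    (fun x hx ↦ ?_) (fun t ht ↦ hCU ⟨hC' t ht, (hNK (Ioo_subset_Icc_self ht)).1⟩) ?_
  · obtain ⟨L, W, hW, hLW⟩ := hlip x hx
    exact ⟨L, W, mem_nhdsWithin_of_mem_nhds hW, hLW⟩
  · filter_upwards [hF] with t hFt ht
    have htI := Ioo_subset_Icc_self ht
    exact hflow _ ⟨⟨hC' t ht, (hNK htI).1⟩, (hNK htI).2⟩ _ (hFt (hdom t htI))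

theorem flow_mem_sublevel (hs : IsSolution H s) (hN : IsOpen N) (hVcont : ContinuousOn V N)
    (hVlip : LocallyLipschitzOnNhdOf V (H.C ∩ N)) (hflow : ∀ x ∈ (H.C ∩ N) \ K, uC_le H V x 0)
    {r : ℝ≥0∞} (hS : IsClosed (sublevel V N r))
    (hK : ∀ t j, (t, j) ∈ s.dom → s.toFun t j ∉ K)
    {j : ℕ} {a b : ℝ} (hab : a ≤ b) (ha : (a, j) ∈ s.dom) (hb : (b, j) ∈ s.dom)
    (haS : s.toFun a j ∈ sublevel V N r) :
    s.toFun b j ∈ sublevel V N r ∧ V (s.toFun b j) ≤ V (s.toFun a j) := by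
  have hdom (t) (ht : t ∈ Icc a b) : (t, j) ∈ s.dom := s.htd.mem_of_mem_Icc ha hb ht
  have hmaps : MapsTo (s.toFun · j) (Icc a b) (sublevel V N r) := by
    refine mapsTo_sublevel_of_antitone (hs.continuousOn_flow hab ha hb) hN hS
      (fun x hx y hy hxy hxyN ↦ ?_) haS
    refine hs.le_of_flow_mapsTo hVcont hVlip hflow hxy (hdom x hx) (hdom y hy)
      fun t ht ↦ ⟨hxyN ht, hK _ _ (hdom t ⟨hx.1.trans ht.1, ht.2.trans hy.2⟩)⟩
  exact ⟨hmaps ⟨hab, le_rfl⟩, hs.le_of_flow_mapsTo hVcont hVlip hflow hab ha hb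
    fun t ht ↦ ⟨(hmaps ht).1, hK _ _ (hdom t ht)⟩⟩

theorem mem_sublevel_and_le_sub_mul {r : ℝ≥0∞} {c : ℝ} (hs : IsSolution H s) (hN : IsOpen N)
    (hVcont : ContinuousOn V N) (hVlip : LocallyLipschitzOnNhdOf V (H.C ∩ N))
    (hflow : ∀ x ∈ (H.C ∩ N) \ K, uC_le H V x 0)
    (hjump : ∀ x ∈ (H.D ∩ N) \ K, uD_le H V x (-(min c (V x))))
    (hGN : ∀ x ∈ N, H.G x ⊆ N) (hpos : ∀ x ∈ N \ K, 0 < V x) (hc : 0 < c)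
    (hS : IsClosed (sublevel V N r)) (hK : ∀ t j, (t, j) ∈ s.dom → s.toFun t j ∉ K)
    (h0 : s.toFun 0 0 ∈ sublevel V N r) (j : ℕ) {t : ℝ} (ht : (t, j) ∈ s.dom) :
    s.toFun t j ∈ sublevel V N r ∧ V (s.toFun t j) ≤ V (s.toFun 0 0) - j * c := by
  induction j generalizing t with
  | zero =>
    simpa using hs.flow_mem_sublevel hN hVcont hVlip hflow hS hK (s.htd.1 _ ht) s.zero_mem ht h0
  | succ j ih =>
    obtain ⟨t', ht't, hj, hj1⟩ := s.htd.exists_jump_le ht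
    obtain ⟨hyS, hyV⟩ := ih hj
    obtain ⟨hyD, hzG⟩ := hs.jump t' j hj hj1
    have hzN := hGN _ hyS.1 hzG
    have hzV := le_sub_of_uD_le_neg_min (hjump _ ⟨⟨hyD, hyS.1⟩, hK _ _ hj⟩) hzG
      (hpos _ ⟨hzN, hK _ _ hj1⟩)
    have hzS : s.toFun t' (j + 1) ∈ sublevel V N r :=
      ⟨hzN, (ENNReal.ofReal_le_ofReal (by linarith)).trans hyS.2⟩
    obtain ⟨htS, htV⟩ := hs.flow_mem_sublevel hN hVcont hVlip hflow hS hK ht't hj1 ht hzS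
    refine ⟨htS, ?_⟩
    push_cast
    linarith

end IsSolution

theorem eventually_sufficient_jump_general
    (n : ℕ) (H : HybridSystem n) (p : ES n → Prop) (K : Set (ES n))
    (hK : K = {x ∈ H.X | p x})
    (N : Set (ES n)) (hNopen : IsOpen N) (hNX : N ⊆ H.X)
    (hGN : ∀ x ∈ N, H.G x ⊆ N)
    (V : ES n → ℝ) (hVcont : ContinuousOn V N)
    (hVlip : LocallyLipschitzOnNhdOf V (H.C ∩ N))
    (c : ℝ) (hc : 0 < c)
    (h21 : ∀ x ∈ N ∩ (closure H.C ∪ H.D), ¬ p x →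
      ∀ s : HybridArc n, IsMaximal H s → s.toFun 0 0 = x →
        (⌈V x / c⌉₊ : ℝ≥0∞) ≤ domSupJ s)
    (hpd : PosDefWrt V K N)
    (h22a : ∀ x ∈ (H.C ∩ N) \ K, uC_le H V x 0)
    (h22b : ∀ x ∈ (H.D ∩ N) \ K, uD_le H V x (-(min c (V x)))) :
    ∀ r : ℝ≥0∞, IsCompact (sublevel V N r) →
      ∀ s : HybridArc n, IsMaximal H s →
        s.toFun 0 0 ∈ sublevel V N r ∩ (closure H.C ∪ H.D) →
          ∃ t' : ℝ, ∃ j' : ℕ, (t', j') ∈ s.dom ∧ s.toFun t' j' ∈ K := by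
  intro r hr s hmax ⟨h0S, h0init⟩
  by_contra! hnotK
  have h0K : s.toFun 0 0 ∉ K := hnotK 0 0 s.zero_mem
  have hp0 : ¬ p (s.toFun 0 0) := fun hp ↦ h0K (hK ▸ ⟨hNX h0S.1, hp⟩)
  obtain ⟨⟨t, J⟩, hJ, hmJ⟩ := HybridArc.exists_mem_dom_le_snd (h21 _ ⟨h0S.1, h0init⟩ hp0 s hmax rfl)
  obtain ⟨hJS, hJV⟩ := hmax.1.mem_sublevel_and_le_sub_mul hNopen hVcont hVlip h22a h22b hGN hpd.2
    hc hr.isClosed hnotK h0S J hJ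
  have hceil : V (s.toFun 0 0) ≤ J * c :=
    (div_le_iff₀ hc).1 ((Nat.le_ceil _).trans (Nat.cast_le.2 hmJ))
  linarith [hpd.2 _ ⟨hJS.1, hnotK _ _ hJ⟩]

/-- Lyapunov conditions (decrease at jumps) sufficient for `◇p`. -/
theorem eventually_sufficient_jump
    (n : ℕ) (H : HybridSystem n) (p : ES n → Prop) (K : Set (ES n))
    (hK : K = {x ∈ H.X | p x}) (hKne : K.Nonempty) (hKcl : IsClosed K)
    (N : Set (ES n)) (hNopen : IsOpen N) (hKN : K ⊆ N) (hNX : N ⊆ H.X)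
    (hGN : ∀ x ∈ N, H.G x ⊆ N)
    (V : ES n → ℝ) (hVcont : ContinuousOn V N) (hVnn : ∀ x ∈ N, 0 ≤ V x)
    (hVlip : LocallyLipschitzOnNhdOf V (H.C ∩ N))
    (c : ℝ) (hc : 0 < c)
    (h21 : ∀ x ∈ N ∩ (closure H.C ∪ H.D), ¬ p x →
      ∀ s : HybridArc n, IsMaximal H s → s.toFun 0 0 = x →
        (⌈V x / c⌉₊ : ℝ≥0∞) ≤ domSupJ s)
    (hpd : PosDefWrt V K N)
    (h22a : ∀ x ∈ (H.C ∩ N) \ K, uC_le H V x 0)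
    (h22b : ∀ x ∈ (H.D ∩ N) \ K, uD_le H V x (-(min c (V x)))) :
    ∀ r : ℝ≥0∞, IsCompact (sublevel V N r) →
      ∀ s : HybridArc n, IsMaximal H s →
        s.toFun 0 0 ∈ sublevel V N r ∩ (closure H.C ∪ H.D) →
          ∃ t' : ℝ, ∃ j' : ℕ, (t', j') ∈ s.dom ∧ s.toFun t' j' ∈ K :=
  eventually_sufficient_jump_general n H p K hK N hNopen hNX hGN V hVcont hVlip c hc h21 hpd h22a
    h22b
end
end
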